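/- Let T be a fault tree and M its set of minimal cut sets. Then U(T) ≤ Σ_{f∈M} ∏_{v ∈ BE(T): f_v = 1} p(v). -/

import Mathlib

open Finset

/-- Gate types of a (static) fault tree. -/
inductive Gate where
  | OR | AND | BE
deriving DecidableEq

/-- A fault tree on a vertex type `V`: a children function (giving the edges),
a root, a gate labelling and failure probabilities for the basic events. -/
structure FT (V : Type*) where
  children : V → Finset V
  root : V
  gate : V → Gate
  p : V → ℝ

namespace FT

variable {V : Type*} [Fintype V] [DecidableEq V]

/-- The edge relation: `T.edge a b` iff there is an edge `a → b`. -/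
def edge (T : FT V) (a b : V) : Prop := b ∈ T.children a

/-- `x ⪯ y` iff there is a directed path from `y` to `x`. -/
def vle (T : FT V) (x y : V) : Prop := Relation.ReflTransGen T.edge y x

/-- `x ≺ y`. -/
def vlt (T : FT V) (x y : V) : Prop := T.vle x y ∧ x ≠ y

/-- Well-formedness of a fault tree: every node is reachable from the root,
the graph is acyclic, a node is a basic event iff it is a leaf, and failure
probabilities of basic events lie in `[0,1]`. -/
def WF (T : FT V) : Prop :=
  (∀ v, Relation.ReflTransGen T.edge T.root v) ∧
  (∀ v, ¬ Relation.TransGen T.edge v v) ∧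
  (∀ v, (T.gate v = Gate.BE ↔ T.children v = ∅)) ∧
  (∀ v, T.gate v = Gate.BE → 0 ≤ T.p v ∧ T.p v ≤ 1)

/-- The set `BE(T)` of basic events. -/
def BEs (T : FT V) : Finset V := Finset.univ.filter fun v => T.gate v = Gate.BE

/-- The structure function: `T.Fails f v` holds iff `struc_T(v,f) = 1`,
i.e. the safety event `f` propagates to the node `v`. -/
inductive Fails (T : FT V) (f : V → Bool) : V → Prop
  | be {v : V} : T.gate v = Gate.BE → f v = true → Fails T f v
  | or {v w : V} : T.gate v = Gate.OR → w ∈ T.children v → Fails T f w → Fails T f v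
  | and {v : V} : T.gate v = Gate.AND → (∀ w ∈ T.children v, Fails T f w) → Fails T f v

/-- A function `V → Bool` encodes an element of `{0,1}^{BE(T)}` iff it is
`false` outside the basic events. -/
def Normalized (T : FT V) (f : V → Bool) : Prop :=
  ∀ v, T.gate v ≠ Gate.BE → f v = false

/-- The probability weight `∏_{v : f_v = 1} p(v) ∏_{v : f_v = 0} (1 - p(v))`. -/
noncomputable def weight (T : FT V) (f : V → Bool) : ℝ :=
  ∏ v ∈ T.BEs, if f v then T.p v else 1 - T.p v

open scoped Classical in
/-- The set `CS(T)` of cut sets (as normalized Boolean vectors). -/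
noncomputable def cutSets (T : FT V) : Finset (V → Bool) :=
  Finset.univ.filter fun f => T.Normalized f ∧ T.Fails f T.root

/-- The unreliability `U(T)`. -/
noncomputable def unrel (T : FT V) : ℝ := ∑ f ∈ T.cutSets, T.weight f

/-- `f` is a minimal cut set. -/
def MinCut (T : FT V) (f : V → Bool) : Prop :=
  T.Normalized f ∧ T.Fails f T.root ∧
  ∀ g : V → Bool, T.Normalized g → T.Fails g T.root → (∀ v, g v ≤ f v) → g = f

end FT

open FT

section AuxLemmas

open Finset
variable {V : Type*} [Fintype V] [DecidableEq V]

lemma fails_mono (T : FT V) {f g : V → Bool} (h : ∀ v, f v ≤ g v) {v : V}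
    (hf : T.Fails f v) : T.Fails g v := by
  induction hf with
  | @be w h1 h2 =>
    refine .be h1 ?_
    have hw := h w
    rw [h2] at hw
    exact le_antisymm (Bool.le_true _) hw ▸ rfl
  | or h1 h2 _ ih => exact .or h1 h2 ih
  | and h1 _ ih => exact .and h1 ih

lemma exists_minCut_le (T : FT V) {f : V → Bool} (hn : T.Normalized f)
    (hf : T.Fails f T.root) : ∃ m, T.MinCut m ∧ ∀ v, m v ≤ f v := by
  classical
  set S : Finset (V → Bool) :=
    univ.filter fun g => T.Normalized g ∧ T.Fails g T.root ∧ ∀ v, g v ≤ f v with hSdef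
  have hfS : f ∈ S := by
    simp only [hSdef, mem_filter, mem_univ, true_and]
    exact ⟨hn, hf, fun v => le_refl _⟩
  obtain ⟨m, hmS, hmin⟩ := Finset.exists_minimal ⟨f, hfS⟩
  simp only [hSdef, mem_filter, mem_univ, true_and] at hmS
  refine ⟨m, ⟨hmS.1, hmS.2.1, ?_⟩, hmS.2.2⟩
  intro g hg1 hg2 hg3
  by_contra hne
  have hgS : g ∈ S := by
    simp only [hSdef, mem_filter, mem_univ, true_and]
    exact ⟨hg1, hg2, fun v => le_trans (hg3 v) (hmS.2.2 v)⟩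
  exact hne (le_antisymm (Pi.le_def.mpr hg3) (hmin hgS (Pi.le_def.mpr hg3)))

lemma weight_nonneg (T : FT V) (hT : T.WF) (f : V → Bool) : 0 ≤ T.weight f := by
  refine Finset.prod_nonneg fun v hv => ?_
  have hv' : T.gate v = Gate.BE := by simpa [FT.BEs] using hv
  obtain ⟨h0, h1⟩ := hT.2.2.2 v hv'
  split <;> linarith

open scoped Classical in
lemma sum_weight_ge (T : FT V) {m : V → Bool} (hm : T.Normalized m) :
    ∑ f ∈ univ.filter (fun f : V → Bool => T.Normalized f ∧ ∀ v, m v ≤ f v), T.weight f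
      = ∏ v ∈ T.BEs.filter (fun v => m v = true), T.p v := by
  classical
  set A : Finset V := T.BEs.filter (fun v => m v = true) with hA
  set D : Finset V := T.BEs \ A with hD
  have hAsub : A ⊆ T.BEs := filter_subset _ _
  have hmemA : ∀ v, v ∈ A ↔ m v = true := by
    intro v
    simp only [hA, mem_filter, FT.BEs, mem_univ, true_and]
    constructor
    · exact fun h => h.2
    · intro h
      refine ⟨?_, h⟩
      by_contra hne
      rw [hm v hne] at h; exact Bool.false_ne_true h
  have key : (∑ f ∈ univ.filter (fun f : V → Bool => T.Normalized f ∧ ∀ v, m v ≤ f v),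
      T.weight f)
      = ∑ t ∈ D.powerset,
          (∏ v ∈ A, T.p v) * ((∏ v ∈ t, T.p v) * ∏ v ∈ D \ t, (1 - T.p v)) := by
    refine Finset.sum_nbij' (i := fun f : V → Bool => D.filter (fun v => f v = true))
      (j := fun t : Finset V => fun v => decide (v ∈ A ∨ v ∈ t))
      (fun f hf => by simp only [mem_powerset]; exact filter_subset _ _)
      ?_ ?_ ?_ ?_
    · -- j maps into the filter set
      intro t ht
      rw [mem_powerset] at ht
      simp only [mem_filter, mem_univ, true_and]
      constructor
      · intro v hv
        have h1 : v ∉ A := fun h => hv (by simpa [FT.BEs] using hAsub h)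
        have h2 : v ∉ t := fun h => hv (by simpa [FT.BEs] using (mem_sdiff.mp (ht h)).1)
        simp [h1, h2]
      · intro v
        cases hmv : m v with
        | false => simp
        | true =>
          have : v ∈ A := (hmemA v).mpr hmv
          simp [this]
    · -- left_inv : j (i f) = f
      intro f hf
      simp only [mem_filter, mem_univ, true_and] at hf
      funext v
      cases hfv : f v with
      | true =>
        have hbe : T.gate v = Gate.BE := by
          by_contra hne
          rw [hf.1 v hne] at hfv; exact Bool.false_ne_true hfv
        have hvBE : v ∈ T.BEs := by simp [FT.BEs, hbe]
        by_cases hvA : v ∈ A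
        · simp [hvA]
        · have : v ∈ D := mem_sdiff.mpr ⟨hvBE, hvA⟩
          simp [mem_filter, this, hfv]
      | false =>
        have h1 : v ∉ A := fun h => by
          have := hf.2 v
          rw [(hmemA v).mp h, hfv] at this
          exact absurd this (by simp)
        simp [h1, mem_filter, hfv]
    · -- right_inv : i (j t) = t
      intro t ht
      rw [mem_powerset] at ht
      ext v
      simp only [mem_filter, decide_eq_true_eq]
      constructor
      · rintro ⟨hvD, hvA | hvt⟩
        · exact absurd hvA (mem_sdiff.mp hvD).2
        · exact hvt
      · intro hv
        exact ⟨ht hv, Or.inr hv⟩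
    · -- weights agree
      intro f hf
      simp only [mem_filter, mem_univ, true_and] at hf
      set Df : Finset V := D.filter (fun v => f v = true) with hDf
      have hif : Df ⊆ D := filter_subset _ _
      unfold FT.weight
      rw [← Finset.prod_sdiff hAsub, ← hD, ← Finset.prod_sdiff hif]
      have e1 : (∏ v ∈ A, if f v = true then T.p v else 1 - T.p v) = ∏ v ∈ A, T.p v := by
        refine Finset.prod_congr rfl fun v hv => ?_
        have hle := hf.2 v
        rw [(hmemA v).mp hv] at hle
        have : f v = true := le_antisymm (Bool.le_true _) hle ▸ rfl
        simp [this]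
      have e2 : (∏ v ∈ Df, if f v = true then T.p v else 1 - T.p v) = ∏ v ∈ Df, T.p v :=
        Finset.prod_congr rfl fun v hv => by simp [(mem_filter.mp hv).2]
      have e3 : (∏ v ∈ D \ Df, if f v = true then T.p v else 1 - T.p v)
          = ∏ v ∈ D \ Df, (1 - T.p v) := by
        refine Finset.prod_congr rfl fun v hv => ?_
        have h2 : f v ≠ true := fun hc =>
          (mem_sdiff.mp hv).2 (mem_filter.mpr ⟨(mem_sdiff.mp hv).1, hc⟩)
        simp [h2]
      rw [e1, e2, e3]; ring
  rw [key, ← Finset.mul_sum, ← Finset.prod_add]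
  simp

end AuxLemmas


variable {V : Type*} [Fintype V] [DecidableEq V]

open scoped Classical in
/-- **Statement 16.** `U(T) ≤ Σ_{f ∈ M} ∏_{v ∈ BE(T) : f_v = 1} p(v)`, where `M`
is the set of minimal cut sets of `T`. -/
theorem unrel_le_sum_minCuts (T : FT V) (hT : T.WF) :
    T.unrel ≤
      ∑ f ∈ Finset.univ.filter (fun f : V → Bool => T.MinCut f),
        ∏ v ∈ T.BEs.filter (fun v => f v = true), T.p v := by
  classical
  set M : Finset (V → Bool) := Finset.univ.filter (fun f : V → Bool => T.MinCut f) with hM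
  set c : (V → Bool) → (V → Bool) := fun f =>
    if h : ∃ m, T.MinCut m ∧ ∀ v, m v ≤ f v then h.choose else f with hc
  have hcspec : ∀ f ∈ T.cutSets, T.MinCut (c f) ∧ ∀ v, c f v ≤ f v := by
    intro f hf
    simp only [FT.cutSets, mem_filter, mem_univ, true_and] at hf
    have h : ∃ m, T.MinCut m ∧ ∀ v, m v ≤ f v := exists_minCut_le T hf.1 hf.2
    simp only [hc, dif_pos h]
    exact h.choose_spec
  have hmaps : ∀ f ∈ T.cutSets, c f ∈ M := by
    intro f hf
    simp only [hM, mem_filter, mem_univ, true_and]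
    exact (hcspec f hf).1
  rw [FT.unrel, ← Finset.sum_fiberwise_of_maps_to hmaps T.weight]
  refine Finset.sum_le_sum fun m hm => ?_
  have hmc : T.MinCut m := by simpa [hM] using hm
  calc ∑ f ∈ T.cutSets.filter (fun f => c f = m), T.weight f
      ≤ ∑ f ∈ Finset.univ.filter (fun f : V → Bool => T.Normalized f ∧ ∀ v, m v ≤ f v),
          T.weight f := by
        refine Finset.sum_le_sum_of_subset_of_nonneg ?_ fun f _ _ => weight_nonneg T hT f
        intro f hf
        rw [mem_filter] at hf
        obtain ⟨hf1, hf2⟩ := hf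
        have hspec := hcspec f hf1
        simp only [FT.cutSets, mem_filter, mem_univ, true_and] at hf1
        rw [mem_filter]
        exact ⟨mem_univ _, hf1.1, fun v => hf2 ▸ hspec.2 v⟩
    _ = ∏ v ∈ T.BEs.filter (fun v => m v = true), T.p v := sum_weight_ge T hmc.1
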